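/- Let n, f, f', e, r₁, r₂, r₃ be natural numbers with n = 3f' + 1, f ≤ f', r₁ ≤ f', r₂ ≤ f, and r₃ ≤ f. Then (2f+1)·r₁ + 2(f+1)·n + (f+1)·r₁ + 2·(2f'+1)·r₂ + 2·(2f'+1)·r₃ + (2f+1)·n + (f+1)·n + 2n + 6·e·f' ≤ (12f + 2e + 8)·n. In particular, for constant e the total number of effective messages exchanged between replicas in an epoch, including a possible view change, is O(fn + n). -/

import Mathlib

theorem total_replica_messages_general (n f f' e r₁ r₂ r₃ : ℕ)
    (hn : n = 3 * f' + 1)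
    (hr₁ : r₁ ≤ f') (hr₂ : r₂ ≤ f) (hr₃ : r₃ ≤ f) :
    (2 * f + 1) * r₁ + 2 * (f + 1) * n + (f + 1) * r₁
      + 2 * (2 * f' + 1) * r₂ + 2 * (2 * f' + 1) * r₃ + (2 * f + 1) * n
      + (f + 1) * n + 2 * n + 6 * e * f'
      ≤ (12 * f + 2 * e + 8) * n := by
  subst hn
  have primary : (2 * f + 1) * r₁ + (f + 1) * r₁ ≤ (3 * f + 2) * f' := by
    rw [← add_mul]
    exact Nat.mul_le_mul (by omega) hr₁
  have complainers : 2 * (2 * f' + 1) * r₂ + 2 * (2 * f' + 1) * r₃ ≤ 4 * (2 * f' + 1) * f := by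
    have := Nat.mul_le_mul_left (2 * (2 * f' + 1)) (Nat.add_le_add hr₂ hr₃)
    linarith
  have hff' : 0 ≤ f * f' := Nat.zero_le _
  -- with the r-terms bounded, the goal is linear in the monomials f f', e f', f, f', e
  linarith

/-- Combining Equations (1)-(6): the total number of effective messages
exchanged between replicas in an epoch, including a possible view change,
is at most (12f + 2e + 8)n, i.e., O(fn + n) for constant e. -/
theorem total_replica_messages (n f f' e r₁ r₂ r₃ : ℕ)
    (hn : n = 3 * f' + 1) (hf : f ≤ f')
    (hr₁ : r₁ ≤ f') (hr₂ : r₂ ≤ f) (hr₃ : r₃ ≤ f) :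
    (2 * f + 1) * r₁ + 2 * (f + 1) * n + (f + 1) * r₁
      + 2 * (2 * f' + 1) * r₂ + 2 * (2 * f' + 1) * r₃ + (2 * f + 1) * n
      + (f + 1) * n + 2 * n + 6 * e * f'
      ≤ (12 * f + 2 * e + 8) * n :=
  total_replica_messages_general n f f' e r₁ r₂ r₃ hn hr₁ hr₂ hr₃
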